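/- arXiv:1401.6619 — 4 statements merged into one kernel-verified Lean document; each statement's English description precedes it below -/
import Mathlib

section
/- Let R be a commutative ring with identity 1 ≠ 0, let n ≥ 4, and let a₁, …, aₙ be nonzero independent ideals of R. For each i = 1, …, n let bᵢ = Σ_{j ∈ Sᵢ} aⱼ, where Sᵢ is a nonempty subset of {1, …, n}. Then b₁, …, bₙ induce (in this cyclic order) a cycle of length n in the intersection graph Γ(R) if and only if there exists a permutation π of {1, …, n} such that bᵢ = a_{π(i)} + a_{π(i+1)} for all i = 1, …, n (indices taken modulo n). -/
/-!
Independence of the `a i` makes `T ↦ ∑ j ∈ T, a j` injective on finsets and turns meets into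
intersections: two such sums meet nontrivially iff their index sets do. The question is thus
which families of sets `S i` meet exactly along the cycle `Cₙ`. As `Cₙ` is triangle-free for
`n ≥ 4`, every index lies in at most two sets `S i`, and then in consecutive ones; so picking
`x i ∈ S i ∩ S (i + 1)` gives an injective, hence bijective, map with `S i = {x (i - 1), x i}`.
-/

open SimpleGraph

section SupIndep

variable {α ι : Type*} [CompleteLattice α] {f : ι → α}

theorem iSupIndep.le_finsetSup_iff (hf : iSupIndep f) (hne : ∀ i, f i ≠ ⊥) {s : Finset ι}
    {i : ι} : f i ≤ s.sup f ↔ i ∈ s := by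
  refine ⟨fun hle => by_contra fun hi => hne i ?_, fun hi => Finset.le_sup hi⟩
  rw [Finset.sup_eq_iSup] at hle
  exact (hf.disjoint_biSup (y := ↑s) hi).eq_bot_of_le (by simpa using hle)

theorem iSupIndep.finsetSup_injective (hf : iSupIndep f) (hne : ∀ i, f i ≠ ⊥) :
    Function.Injective fun s : Finset ι => s.sup f := by
  have hsubset {s t : Finset ι} (h : s.sup f ≤ t.sup f) : s ⊆ t := fun i hi =>
    (hf.le_finsetSup_iff hne).1 ((Finset.le_sup hi).trans h)
  exact fun s t hst => (hsubset hst.le).antisymm (hsubset hst.ge)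

theorem iSupIndep.finsetSup_ne_top (hf : iSupIndep f) (hne : ∀ i, f i ≠ ⊥) {s : Finset ι}
    {i : ι} (hi : i ∉ s) : s.sup f ≠ ⊤ :=
  fun h => hi ((hf.le_finsetSup_iff hne).1 (h ▸ le_top))

theorem iSupIndep.disjoint_finsetSup_iff [IsModularLattice α] (hf : iSupIndep f)
    (hne : ∀ i, f i ≠ ⊥) {s t : Finset ι} : Disjoint (s.sup f) (t.sup f) ↔ Disjoint s t := by
  refine ⟨fun h => Finset.disjoint_left.2 fun i his hit =>
    hne i (le_bot_iff.1 (h (Finset.le_sup his) (Finset.le_sup hit))), fun h => ?_⟩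
  simpa only [Finset.sup_eq_iSup, Finset.mem_coe] using
    hf.disjoint_biSup_biSup' (Finset.disjoint_coe.2 h) s.finite_toSet

end SupIndep

theorem Ideal.iSupIndep_of_inf_sum_erase_eq_bot {R ι : Type*} [CommSemiring R] [Fintype ι]
    [DecidableEq ι] {a : ι → Ideal R} (h : ∀ i, a i ⊓ ∑ j ∈ Finset.univ.erase i, a j = ⊥) :
    iSupIndep a := by
  rw [iSupIndep_iff_supIndep_univ, Finset.supIndep_iff_disjoint_erase]
  exact fun i _ => disjoint_iff.2 (Ideal.sum_eq_sup _ a ▸ h i)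

namespace Fin

variable {n : ℕ} [NeZero n]

theorem val_add_one_eq_ite (i : Fin n) :
    ((i + 1 : Fin n) : ℕ) = if i.val + 1 = n then 0 else i.val + 1 := by
  obtain ⟨m, rfl⟩ : ∃ m, n = m + 1 := Nat.exists_eq_add_one.2 (Nat.pos_of_neZero n)
  simp [Fin.val_add_one, Fin.ext_iff]

theorem add_one_ne_self (hn : 2 ≤ n) (i : Fin n) : i + 1 ≠ i := by
  have := i.isLt
  simp only [Ne, Fin.ext_iff, val_add_one_eq_ite]
  split_ifs <;> omega

theorem add_one_add_one_ne_self (hn : 3 ≤ n) (i : Fin n) : i + 1 + 1 ≠ i := by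
  have := i.isLt
  simp only [Ne, Fin.ext_iff, val_add_one_eq_ite]
  split_ifs <;> omega

theorem add_one_add_one_add_one_ne_self (hn : 4 ≤ n) (i : Fin n) : i + 1 + 1 + 1 ≠ i := by
  have := i.isLt
  simp only [Ne, Fin.ext_iff, val_add_one_eq_ite]
  split_ifs <;> omega

end Fin

namespace SimpleGraph

variable {n : ℕ} [NeZero n]

theorem cycleGraph_adj_iff (hn : 2 ≤ n) {i j : Fin n} :
    (cycleGraph n).Adj i j ↔ i = j + 1 ∨ j = i + 1 := by
  have h1 : ((1 : Fin n) : ℕ) = 1 := by rw [Fin.val_one', Nat.mod_eq_of_lt (by omega)]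
  rw [cycleGraph_adj', ← h1, ← Fin.ext_iff, ← Fin.ext_iff, sub_eq_iff_eq_add', sub_eq_iff_eq_add']

theorem cycleGraph_cliqueFree_three (hn : 4 ≤ n) : (cycleGraph n).CliqueFree 3 := by
  have no_triangle_at_succ (i k : Fin n) (hik : (cycleGraph n).Adj i k)
      (hjk : (cycleGraph n).Adj (i + 1) k) : False := by
    rw [cycleGraph_adj_iff (by omega)] at hik hjk
    rcases hjk with h | rfl
    · obtain rfl := add_right_cancel h
      exact Fin.add_one_ne_self (by omega) i (hik.elim Eq.symm Eq.symm)
    · rcases hik with h | h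
      · exact Fin.add_one_add_one_add_one_ne_self hn i h.symm
      · exact Fin.add_one_ne_self (by omega) _ (add_right_cancel h)
  intro s hs
  obtain ⟨i, j, k, hij, hik, hjk, rfl⟩ := is3Clique_iff.1 hs
  rcases (cycleGraph_adj_iff (by omega)).1 hij with rfl | rfl
  · exact no_triangle_at_succ j k hjk hik
  · exact no_triangle_at_succ i k hik hjk

end SimpleGraph

section CyclePatterns

variable {n : ℕ}

def MeetsAlongCycle {α : Type*} [PartialOrder α] [OrderBot α] (c : Fin n → α) : Prop :=
  ∀ i j, i ≠ j → (¬Disjoint (c i) (c j) ↔ (cycleGraph n).Adj i j)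

/-- `c` induces, in this cyclic order, a cycle of length `n` in the intersection graph of `α`. -/
def InducesCycle {α : Type*} [Lattice α] [BoundedOrder α] (c : Fin n → α) : Prop :=
  (∀ i, c i ≠ ⊥ ∧ c i ≠ ⊤) ∧ Function.Injective c ∧ MeetsAlongCycle c

variable [NeZero n]

namespace MeetsAlongCycle

variable {α : Type*} {S : Fin n → Finset α}

theorem eq_or_eq_or_eq_of_mem (hS : MeetsAlongCycle S) (hn : 4 ≤ n) {z : α} {i j k : Fin n}
    (hi : z ∈ S i) (hj : z ∈ S j) (hk : z ∈ S k) : i = j ∨ j = k ∨ i = k := by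
  have adj {p q : Fin n} (hp : z ∈ S p) (hq : z ∈ S q) (hpq : p ≠ q) : (cycleGraph n).Adj p q :=
    (hS p q hpq).1 (Finset.not_disjoint_iff.2 ⟨z, hp, hq⟩)
  by_contra! h
  obtain ⟨hij, hjk, hik⟩ := h
  exact cycleGraph_cliqueFree_three hn {i, j, k}
    (is3Clique_triple_iff.2 ⟨adj hi hj hij, adj hi hk hik, adj hj hk hjk⟩)

theorem exists_perm_eq_pair {S : Fin n → Finset (Fin n)} (hS : MeetsAlongCycle S) (hn : 4 ≤ n) :
    ∃ π : Equiv.Perm (Fin n), ∀ i, S i = {π i, π (i + 1)} := by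
  have hsucc (i : Fin n) : i + 1 ≠ i := Fin.add_one_ne_self (by omega) i
  have hmeet (i : Fin n) : ∃ z, z ∈ S i ∧ z ∈ S (i + 1) :=
    Finset.not_disjoint_iff.1 <| (hS i (i + 1) (hsucc i).symm).2 <|
      (cycleGraph_adj_iff (by omega)).2 (Or.inr rfl)
  choose x hx hx_succ using hmeet
  have hx_inj : Function.Injective x := by
    intro i j hij
    rcases hS.eq_or_eq_or_eq_of_mem hn (hx i) (hx_succ i) (hij ▸ hx j) with h | rfl | h
    · exact absurd h.symm (hsucc i)
    · rcases hS.eq_or_eq_or_eq_of_mem hn (hx i) (hx_succ i) (hij ▸ hx_succ (i + 1)) with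
        h | h | h
      · exact absurd h.symm (hsucc i)
      · exact absurd h.symm (hsucc (i + 1))
      · exact absurd h.symm (Fin.add_one_add_one_ne_self (by omega) i)
    · exact h
  have hx_surj := Finite.surjective_of_injective hx_inj
  let π := (Equiv.subRight 1).trans (Equiv.ofBijective x ⟨hx_inj, hx_surj⟩)
  have hπ (i : Fin n) : π i = x (i - 1) := rfl
  refine ⟨π, fun i => ?_⟩
  rw [hπ, hπ, add_sub_cancel_right]
  refine Finset.Subset.antisymm (fun z hz => ?_) ?_
  · obtain ⟨j, rfl⟩ := hx_surj z
    rcases hS.eq_or_eq_or_eq_of_mem hn (hx j) (hx_succ j) hz with h | rfl | rfl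
    · exact absurd h.symm (hsucc j)
    · simp
    · simp
  · have := hx_succ (i - 1)
    rw [sub_add_cancel] at this
    exact Finset.insert_subset this (Finset.singleton_subset_iff.2 (hx i))

end MeetsAlongCycle

variable {α : Type*} [DecidableEq α]

theorem meetsAlongCycle_pair_succ (hn : 2 ≤ n) {x : Fin n → α} (hx : Function.Injective x) :
    MeetsAlongCycle fun i => ({x i, x (i + 1)} : Finset α) := by
  intro i j hij
  simp only [Finset.not_disjoint_iff, Finset.mem_insert, Finset.mem_singleton,
    cycleGraph_adj_iff hn]
  constructor
  · rintro ⟨z, hzi | hzi, hzj | hzj⟩ <;> subst hzi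
    · exact absurd (hx hzj) hij
    · exact Or.inl (hx hzj)
    · exact Or.inr (hx hzj).symm
    · exact absurd (add_right_cancel (hx hzj)) hij
  · rintro (rfl | rfl)
    · exact ⟨x (j + 1), by simp⟩
    · exact ⟨x (i + 1), by simp⟩

theorem injective_pair_succ (hn : 3 ≤ n) {x : Fin n → α} (hx : Function.Injective x) :
    Function.Injective fun i => ({x i, x (i + 1)} : Finset α) := by
  intro i j (hij : ({x i, x (i + 1)} : Finset α) = {x j, x (j + 1)})
  have hi : x i ∈ ({x j, x (j + 1)} : Finset α) := hij ▸ Finset.mem_insert_self _ _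
  have hj : x j ∈ ({x i, x (i + 1)} : Finset α) := hij.symm ▸ Finset.mem_insert_self _ _
  simp only [Finset.mem_insert, Finset.mem_singleton, hx.eq_iff] at hi hj
  rcases hi with hi | rfl
  · exact hi
  · rcases hj with hj | hj
    · exact hj.symm
    · exact absurd hj.symm (Fin.add_one_add_one_ne_self hn j)

end CyclePatterns

namespace iSupIndep

variable {n : ℕ} {α ι : Type*} [CompleteLattice α] [IsModularLattice α] {f : ι → α}

theorem meetsAlongCycle_finsetSup_iff (hf : iSupIndep f) (hne : ∀ i, f i ≠ ⊥)
    {S : Fin n → Finset ι} : MeetsAlongCycle (fun i => (S i).sup f) ↔ MeetsAlongCycle S := by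
  simp only [MeetsAlongCycle, hf.disjoint_finsetSup_iff hne]

theorem inducesCycle_sup_pair [NeZero n] (hf : iSupIndep f) (hne : ∀ i, f i ≠ ⊥) (hn : 3 ≤ n)
    {x : Fin n → ι} (hx : Function.Injective x) :
    InducesCycle fun i => f (x i) ⊔ f (x (i + 1)) := by
  classical
  have hpair : (fun i => f (x i) ⊔ f (x (i + 1))) =
      fun i => ({x i, x (i + 1)} : Finset ι).sup f := by
    simp
  refine ⟨fun i => ⟨fun h => hne _ (le_bot_iff.1 (le_sup_left.trans h.le)), ?_⟩, ?_, ?_⟩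
  · have hi : i + 1 + 1 ≠ i := Fin.add_one_add_one_ne_self hn i
    have hi' : i + 1 + 1 ≠ i + 1 := Fin.add_one_ne_self (by omega) (i + 1)
    rw [hpair]
    exact hf.finsetSup_ne_top hne (i := x (i + 1 + 1)) (by simp [hx.eq_iff, hi, hi'])
  · rw [hpair]
    exact (hf.finsetSup_injective hne).comp (injective_pair_succ hn hx)
  · rw [hpair, hf.meetsAlongCycle_finsetSup_iff hne]
    exact meetsAlongCycle_pair_succ (by omega) hx

end iSupIndep

/-- Let `a 0, …, a (n-1)` (`n ≥ 4`) be nonzero independent ideals of `R`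
and let `b i = Σ_{j ∈ S i} a j` where each `S i` is a nonempty subset of indices.  Then
`b 0, …, b (n-1)` induce, in this cyclic order, a cycle of length `n` in the intersection
graph `Γ(R)` if and only if there is a permutation `π` of the indices with
`b i = a (π i) + a (π (i+1))` (indices mod `n`) for all `i`. -/
theorem intersectionGraph_cycle_of_sums_iff_perm
    (R : Type*) [CommRing R] (n : ℕ) (hn : 4 ≤ n)
    (a : Fin n → Ideal R) (ha : ∀ i, a i ≠ ⊥)
    (h_indep : ∀ i, a i ⊓ (∑ j ∈ Finset.univ.erase i, a j) = ⊥)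
    (S : Fin n → Finset (Fin n))
    (b : Fin n → Ideal R) (hb : ∀ i, b i = ∑ j ∈ S i, a j) :
    ((∀ i, b i ≠ ⊥ ∧ b i ≠ ⊤) ∧ Function.Injective b ∧
      (∀ i j, i ≠ j →
        (b i ⊓ b j ≠ ⊥ ↔ (j.val = (i.val + 1) % n ∨ i.val = (j.val + 1) % n)))) ↔
    (∃ π : Equiv.Perm (Fin n), ∀ i : Fin n,
      b i = a (π i) + a (π ⟨(i.val + 1) % n, Nat.mod_lt _ (by omega)⟩)) := by
  have : NeZero n := ⟨by omega⟩
  have hind := Ideal.iSupIndep_of_inf_sum_erase_eq_bot h_indep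
  have hsucc (i : Fin n) : (⟨(i.val + 1) % n, Nat.mod_lt _ (by omega)⟩ : Fin n) = i + 1 := by
    ext; simp [Fin.val_add]
  have hadj (i j : Fin n) : (j.val = (i.val + 1) % n ∨ i.val = (j.val + 1) % n) ↔
      (cycleGraph n).Adj i j := by
    rw [cycleGraph_adj_iff (by omega), ← hsucc, ← hsucc, Fin.ext_iff, Fin.ext_iff, or_comm]
  have hb' : b = fun i => (S i).sup a := funext fun i => (hb i).trans (Ideal.sum_eq_sup _ _)
  simp only [hsucc, hadj, Ne, ← disjoint_iff, Submodule.add_eq_sup]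
  change InducesCycle b ↔ _
  constructor
  · rintro ⟨-, -, hcycle⟩
    rw [hb', hind.meetsAlongCycle_finsetSup_iff ha] at hcycle
    obtain ⟨π, hπ⟩ := hcycle.exists_perm_eq_pair hn
    exact ⟨π, fun i => by simp [hb', hπ]⟩
  · rintro ⟨π, hπ⟩
    rw [funext hπ]
    exact hind.inducesCycle_sup_pair ha (by omega) π.injective
end

section
/- Let R be a reduced commutative ring with identity 1 ≠ 0 and let n ≥ 2 be a natural number. There exist nonzero independent ideals a₁, …, aₙ of R such that a₁ + ⋯ + aₙ ≠ R if and only if the intersection graph Γ(R) contains an induced n-claw, i.e. there exist pairwise distinct vertices c, v₁, …, vₙ such that c is adjacent to each vᵢ and v₁, …, vₙ are pairwise nonadjacent. -/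
/-!
A family of nonzero independent ideals with proper sum `s` is an induced claw with centre `s`.
Conversely, the centre `c` of a claw meets its leaves `vᵢ` in nonzero ideals `c ⊓ vᵢ` that
still pairwise meet in `0`, and `c ⊓ vᵢ ≤ c` keeps their sum proper. In a reduced ring
`I ⊓ J = 0` iff `I * J = 0`, and multiplication distributes over sums of ideals, so pairwise
disjoint ideals are already independent.
-/

open Function

section Claw

variable {α ι : Type*}

/-- An induced claw with centre `c` and leaves `v` in the intersection graph of `α`, whose
vertices are the elements other than `⊥` and `⊤`, two of them adjacent when their meet is not
`⊥`. -/
def IsInducedClaw [Lattice α] [BoundedOrder α] (c : α) (v : ι → α) : Prop :=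
  (c ≠ ⊥ ∧ c ≠ ⊤) ∧ (∀ i, v i ≠ ⊥ ∧ v i ≠ ⊤) ∧ Injective v ∧ (∀ i, v i ≠ c) ∧
    (∀ i, c ⊓ v i ≠ ⊥) ∧ (∀ i j, i ≠ j → v i ⊓ v j = ⊥)

theorem IsInducedClaw.pairwise_disjoint_inf [Lattice α] [BoundedOrder α] {c : α} {v : ι → α}
    (h : IsInducedClaw c v) : Pairwise (Disjoint on fun i => c ⊓ v i) := fun i j hij =>
  let ⟨_, _, _, _, _, hleaves⟩ := h
  (disjoint_iff.mpr (hleaves i j hij)).mono inf_le_right inf_le_right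

theorem iSupIndep.isInducedClaw_iSup [CompleteLattice α] [Nontrivial ι] {t : ι → α}
    (ht : iSupIndep t) (hne : ∀ i, t i ≠ ⊥) (htop : ⨆ i, t i ≠ ⊤) :
    IsInducedClaw (⨆ i, t i) t := by
  have hdisj := ht.pairwiseDisjoint
  refine ⟨⟨fun h => ?_, htop⟩, fun i => ⟨hne i, fun h => ?_⟩, ht.injective hne,
    fun i h => ?_, fun i => ?_, fun i j hij => (hdisj hij).eq_bot⟩
  · exact hne (Classical.arbitrary ι) (iSup_eq_bot.mp h _)
  · obtain ⟨j, hji⟩ := exists_ne i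
    exact hne j (top_disjoint.mp (h ▸ hdisj hji.symm))
  · obtain ⟨j, hji⟩ := exists_ne i
    exact hne j ((hdisj hji).eq_bot_of_le ((le_iSup t j).trans h.ge))
  · rw [inf_eq_right.mpr (le_iSup t i)]
    exact hne i

end Claw

namespace Ideal

variable {R ι : Type*}

theorem disjoint_iff_mul_eq_bot [CommSemiring R] [IsReduced R] {I J : Ideal R} :
    Disjoint I J ↔ I * J = ⊥ := by
  refine ⟨fun h => eq_bot_mono mul_le_inf (disjoint_iff.mp h), fun h => disjoint_iff.mpr (le_bot_iff.mp ?_)⟩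
  calc I ⊓ J ≤ radical I ⊓ radical J := inf_le_inf le_radical le_radical
    _ = ⊥ := by rw [← radical_mul, h, radical_bot_of_isReduced]

theorem iSupIndep_of_pairwise_disjoint [CommSemiring R] [IsReduced R] {t : ι → Ideal R}
    (h : Pairwise (Disjoint on t)) : iSupIndep t :=
  iSupIndep_def.mpr fun i => disjoint_iff_mul_eq_bot.mpr <| by
    simp only [mul_iSup, iSup_eq_bot]
    exact fun j hji => disjoint_iff_mul_eq_bot.mp (h hji.symm)

theorem iSupIndep_iff_inf_sum_erase_eq_bot [Semiring R] [Fintype ι] [DecidableEq ι]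
    {a : ι → Ideal R} : iSupIndep a ↔ ∀ i, a i ⊓ ∑ j ∈ Finset.univ.erase i, a j = ⊥ := by
  simp [iSupIndep_iff_supIndep_univ, Finset.supIndep_iff_disjoint_erase, sum_eq_sup,
    disjoint_iff]

end Ideal

theorem intersectionGraph_nClaw_iff_independent_of_reduced_general
    (R : Type*) [CommRing R] [IsReduced R] (n : ℕ) (hn : 2 ≤ n) :
    (∃ a : Fin n → Ideal R, (∀ i, a i ≠ ⊥) ∧
      (∀ i, a i ⊓ (∑ j ∈ Finset.univ.erase i, a j) = ⊥) ∧ (∑ i, a i) ≠ ⊤) ↔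
    (∃ (c : Ideal R) (v : Fin n → Ideal R),
      (c ≠ ⊥ ∧ c ≠ ⊤) ∧ (∀ i, v i ≠ ⊥ ∧ v i ≠ ⊤) ∧
      Function.Injective v ∧ (∀ i, v i ≠ c) ∧
      (∀ i, c ⊓ v i ≠ ⊥) ∧ (∀ i j, i ≠ j → v i ⊓ v j = ⊥)) := by
  have : Nontrivial (Fin n) := Fin.nontrivial_iff_two_le.mpr hn
  simp_rw [← Ideal.iSupIndep_iff_inf_sum_erase_eq_bot, Ideal.sum_eq_sup,
    Finset.sup_univ_eq_iSup]
  constructor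
  · rintro ⟨a, hne, hindep, htop⟩
    exact ⟨_, a, hindep.isInducedClaw_iSup hne htop⟩
  · rintro ⟨c, v, hclaw⟩
    obtain ⟨⟨-, hc_top⟩, -, -, -, hmeet, -⟩ := id hclaw
    exact ⟨fun i => c ⊓ v i, hmeet,
      Ideal.iSupIndep_of_pairwise_disjoint (IsInducedClaw.pairwise_disjoint_inf hclaw),
      ne_top_of_le_ne_top hc_top (iSup_le fun _ => inf_le_left)⟩

/-- Let `R` be a reduced commutative ring with `1 ≠ 0` and `n ≥ 2`.
There exist nonzero independent ideals `a 0, …, a (n-1)` whose sum is a proper ideal of `R`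
if and only if the intersection graph `Γ(R)` contains an induced `n`-claw: pairwise
distinct nontrivial ideals `c, v 0, …, v (n-1)` with `c` meeting each `v i` nontrivially
and the `v i` pairwise intersecting in zero. -/
theorem intersectionGraph_nClaw_iff_independent_of_reduced
    (R : Type*) [CommRing R] [Nontrivial R] [IsReduced R] (n : ℕ) (hn : 2 ≤ n) :
    (∃ a : Fin n → Ideal R, (∀ i, a i ≠ ⊥) ∧
      (∀ i, a i ⊓ (∑ j ∈ Finset.univ.erase i, a j) = ⊥) ∧ (∑ i, a i) ≠ ⊤) ↔
    (∃ (c : Ideal R) (v : Fin n → Ideal R),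
      (c ≠ ⊥ ∧ c ≠ ⊤) ∧ (∀ i, v i ≠ ⊥ ∧ v i ≠ ⊤) ∧
      Function.Injective v ∧ (∀ i, v i ≠ c) ∧
      (∀ i, c ⊓ v i ≠ ⊥) ∧ (∀ i j, i ≠ j → v i ⊓ v j = ⊥)) :=
  intersectionGraph_nClaw_iff_independent_of_reduced_general R n hn
end

section
/- Let S be a commutative ring with identity 1 ≠ 0 having at least two nontrivial ideals, and let F be a field. If the intersection graph Γ(S) has a Hamiltonian path, then the intersection graph Γ(S × F) of the product ring S × F has a Hamiltonian cycle. -/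
/-!
The nontrivial ideals of `S × F` are the `I × F` with `I ≠ S` and the `I × 0` with `I ≠ 0`.
Each family contains a copy of `Γ(S)`; moreover `I × F` meets `I × 0`, `0 × F` meets every `I × F`,
and `S × 0` meets every ideal except `0 × F`. For a Hamiltonian path `u₀, u₁, …, uₙ` of `Γ(S)`,
which has `n ≥ 1` since `Γ(S)` has two vertices,
`u₀ × F, 0 × F, u₁ × F, …, uₙ × F, uₙ × 0, …, u₀ × 0, S × 0` is a Hamiltonian cycle of `Γ(S × F)`.
-/

open scoped Classical

/-- The intersection graph of a commutative ring: vertices are the nontrivial ideals,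
two distinct ideals being adjacent iff their intersection is nonzero. -/
def intersectionGraph (R : Type*) [CommRing R] :
    SimpleGraph {I : Ideal R // I ≠ ⊥ ∧ I ≠ ⊤} where
  Adj I J := I ≠ J ∧ (I : Ideal R) ⊓ (J : Ideal R) ≠ ⊥
  symm := ⟨fun I J h => ⟨h.1.symm, by rw [inf_comm]; exact h.2⟩⟩
  loopless := ⟨fun I h => h.1 rfl⟩

open Sum

theorem Ideal.prod_inf_prod {R T : Type*} [Semiring R] [Semiring T] {I I' : Ideal R}
    {J J' : Ideal T} : I.prod J ⊓ I'.prod J' = (I ⊓ I').prod (J ⊓ J') := by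
  ext
  simp only [Submodule.mem_inf, Ideal.mem_prod]
  tauto

namespace SimpleGraph

variable {V : Type*} [DecidableEq V] {G : SimpleGraph V}

theorem Walk.IsHamiltonian.isHamiltonianCycle_cons {a b : V} {p : G.Walk b a}
    (hp : p.IsHamiltonian) (h : G.Adj a b) (hlen : 2 ≤ p.length) :
    (Walk.cons h p).IsHamiltonianCycle := by
  have htail : (Walk.cons h p).tail.IsHamiltonian := by simpa [Walk.IsHamiltonian] using hp
  refine ⟨Walk.isCycle_iff_isPath_tail_and_le_length.mpr ⟨htail.isPath, ?_⟩, htail⟩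
  rw [Walk.length_cons]
  omega

/-- With `p = u, w, …, v`, the cycle runs `inl u, inl none, inl w, …, inl v` and then
`inr v, …, inr u, inr none`, writing `inl x` for `inl (some x)` and likewise for `inr`. -/
theorem Walk.IsHamiltonian.exists_isHamiltonianCycle_option_sum [Nontrivial V]
    {H : SimpleGraph (Option V ⊕ Option V)}
    (hl : ∀ {x y}, G.Adj x y → H.Adj (inl (some x)) (inl (some y)))
    (hr : ∀ {x y}, G.Adj x y → H.Adj (inr (some x)) (inr (some y)))
    (hlr : ∀ x, H.Adj (inl (some x)) (inr (some x)))
    (hl_none : ∀ x, H.Adj (inl none) (inl (some x)))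
    (hr_none_l : ∀ x, H.Adj (inr none) (inl (some x)))
    (hr_none_r : ∀ x, H.Adj (inr (some x)) (inr none))
    {u v : V} {p : G.Walk u v} (hp : p.IsHamiltonian) :
    ∃ (a : Option V ⊕ Option V) (c : H.Walk a a), c.IsHamiltonianCycle := by
  let L : G →g H := ⟨fun x => inl (some x), hl⟩
  let R : G →g H := ⟨fun x => inr (some x), hr⟩
  cases p with
  | nil =>
    obtain ⟨x, hx⟩ := exists_ne u
    have := hp x
    simp [hx.symm] at this
  | @cons _ w _ huw q =>
    let rest : H.Walk (inl none) (inl (some u)) :=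
      .cons (hl_none w) ((q.map L).append (.cons (hlr v)
        (((Walk.cons huw q).reverse.map R).append
          (.cons (hr_none_r u) (.cons (hr_none_l u) .nil)))))
    refine ⟨_, .cons (hl_none u).symm rest, isHamiltonianCycle_cons ?_ _ ?_⟩
    · have hsupp : rest.support = inl none :: (q.support.map (fun x => inl (some x)) ++
          ((u :: q.support).reverse.map (fun x => inr (some x)) ++ [inr none, inl (some u)])) := by
        simp [rest, L, R, Walk.support_append, Walk.support_map, Walk.support_reverse]
      obtain ⟨hu, hq⟩ : u ∉ q.support ∧ q.support.Nodup := by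
        simpa using hp.isPath.support_nodup
      have hcover : ∀ x, x ∈ q.support ∨ x = u := fun x => by
        simpa [or_comm] using hp.mem_support x
      refine (Walk.IsPath.mk' ?_).isHamiltonian_of_mem ?_
      · simpa [hsupp, List.nodup_append] using
          ⟨hq.map (inl_injective.comp (Option.some_injective _)),
            hq.map (inr_injective.comp (Option.some_injective _)), fun a ha h => hu (h ▸ ha)⟩
      · rintro ((_ | x) | (_ | x)) <;> simp [hsupp, hcover]
    · simp only [rest, Walk.length_cons, Walk.length_append, Walk.length_map,
        Walk.length_reverse, Walk.length_nil]
      omega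

end SimpleGraph

section

variable (S F : Type*) [CommRing S] [Field F]

/-- `inl I ↦ I × F` and `inr I ↦ I × 0`, where `none` stands for `0` on the left and for `S` on
the right. -/
def prodIdeal : Option {I : Ideal S // I ≠ ⊥ ∧ I ≠ ⊤} ⊕ Option {I : Ideal S // I ≠ ⊥ ∧ I ≠ ⊤} →
    Ideal (S × F)
  | inl I => (I.elim ⊥ Subtype.val).prod ⊤
  | inr I => (I.elim ⊤ Subtype.val).prod ⊥

variable {S F}

theorem prodIdeal_injective : Function.Injective (prodIdeal S F) := by
  rintro ((_ | ⟨I, hI⟩) | (_ | ⟨I, hI⟩)) ((_ | ⟨J, hJ⟩) | (_ | ⟨J, hJ⟩)) h <;>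
    simp_all only [prodIdeal, Option.elim_none, Option.elim_some, Ideal.prod_inj, eq_comm,
      bot_ne_top, and_true, and_false, and_self, ne_eq]

theorem prodIdeal_ne_bot [Nontrivial S] (a) : prodIdeal S F a ≠ ⊥ := by
  rcases a with (_ | ⟨I, hI⟩) | (_ | ⟨I, hI⟩) <;>
    simp_all only [prodIdeal, Option.elim_none, Option.elim_some, Ideal.prod_eq_bot_iff,
      top_ne_bot, and_true, and_false, and_self, ne_eq, not_false_eq_true]

theorem prodIdeal_ne_top [Nontrivial S] (a) : prodIdeal S F a ≠ ⊤ := by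
  rcases a with (_ | ⟨I, hI⟩) | (_ | ⟨I, hI⟩) <;>
    simp_all only [prodIdeal, Option.elim_none, Option.elim_some, Ideal.prod_eq_top_iff,
      bot_ne_top, and_true, and_false, and_self, ne_eq, not_false_eq_true]

theorem exists_prodIdeal_eq {K : Ideal (S × F)} (hbot : K ≠ ⊥) (htop : K ≠ ⊤) :
    ∃ a, prodIdeal S F a = K := by
  rw [Ideal.ideal_prod_eq K] at hbot htop ⊢
  set I := K.map (RingHom.fst S F)
  rcases (K.map (RingHom.snd S F)).eq_bot_or_top with hJ | hJ <;> rw [hJ] at hbot htop ⊢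
  · by_cases hI : I = ⊤
    · exact ⟨inr none, by simp only [prodIdeal, Option.elim_none, hI]⟩
    · exact ⟨inr (some ⟨I, fun h => hbot (by rw [h, Ideal.prod_bot_bot]), hI⟩), rfl⟩
  · by_cases hI : I = ⊥
    · exact ⟨inl none, by simp only [prodIdeal, Option.elim_none, hI]⟩
    · exact ⟨inl (some ⟨I, hI, fun h => htop (by rw [h, Ideal.prod_top_top])⟩), rfl⟩

variable (S F) in
def prodVertex [Nontrivial S]
    (a : Option {I : Ideal S // I ≠ ⊥ ∧ I ≠ ⊤} ⊕ Option {I : Ideal S // I ≠ ⊥ ∧ I ≠ ⊤}) :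
    {K : Ideal (S × F) // K ≠ ⊥ ∧ K ≠ ⊤} :=
  ⟨prodIdeal S F a, prodIdeal_ne_bot a, prodIdeal_ne_top a⟩

theorem prodVertex_bijective [Nontrivial S] : Function.Bijective (prodVertex S F) :=
  ⟨fun _ _ h => prodIdeal_injective (congrArg Subtype.val h),
    fun K => (exists_prodIdeal_eq K.2.1 K.2.2).imp fun _ h => Subtype.ext h⟩

theorem intersectionGraph_adj_prodVertex [Nontrivial S] {a b} :
    (intersectionGraph (S × F)).Adj (prodVertex S F a) (prodVertex S F b) ↔
      a ≠ b ∧ prodIdeal S F a ⊓ prodIdeal S F b ≠ ⊥ :=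
  and_congr_left' prodVertex_bijective.injective.ne_iff

open SimpleGraph in
theorem exists_isHamiltonianCycle_comap_prodVertex [Nontrivial S]
    [Nontrivial {I : Ideal S // I ≠ ⊥ ∧ I ≠ ⊤}] {u v : {I : Ideal S // I ≠ ⊥ ∧ I ≠ ⊤}}
    {p : (intersectionGraph S).Walk u v} (hp : p.IsHamiltonian) :
    ∃ a, ∃ c : ((intersectionGraph (S × F)).comap (prodVertex S F)).Walk a a,
      c.IsHamiltonianCycle := by
  refine hp.exists_isHamiltonianCycle_option_sum (fun h => ?_) (fun h => ?_) (fun x => ?_)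
    (fun x => ?_) (fun x => ?_) (fun x => ?_)
  all_goals simp only [comap_adj, intersectionGraph_adj_prodVertex, prodIdeal, Option.elim_none,
    Option.elim_some, ne_eq, inl.injEq, inr.injEq, Option.some.injEq, reduceCtorEq,
    Ideal.prod_inf_prod, inf_idem, inf_top_eq, top_inf_eq, inf_bot_eq, bot_inf_eq,
    Ideal.prod_eq_bot_iff, top_ne_bot, not_false_eq_true, and_false, and_true, true_and, and_self]
  exacts [h.1, h, x.2.1, x.2.1, x.2.1]

end

/-- Let `S` be a commutative ring with `1 ≠ 0` having at least two
nontrivial ideals, and let `F` be a field.  If the intersection graph `Γ(S)` has a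
Hamiltonian path, then the intersection graph `Γ(S × F)` has a Hamiltonian cycle. -/
theorem intersectionGraph_prod_field_hamiltonian
    (S F : Type*) [CommRing S] [Nontrivial S] [Field F]
    (h_two : ∃ I J : Ideal S, I ≠ J ∧ (I ≠ ⊥ ∧ I ≠ ⊤) ∧ (J ≠ ⊥ ∧ J ≠ ⊤))
    (h_path : ∃ (u v : {I : Ideal S // I ≠ ⊥ ∧ I ≠ ⊤})
      (p : (intersectionGraph S).Walk u v), p.IsHamiltonian) :
    ∃ (a : {I : Ideal (S × F) // I ≠ ⊥ ∧ I ≠ ⊤})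
      (p : (intersectionGraph (S × F)).Walk a a), p.IsHamiltonianCycle := by
  obtain ⟨I, J, hIJ, hI, hJ⟩ := h_two
  have : Nontrivial {I : Ideal S // I ≠ ⊥ ∧ I ≠ ⊤} :=
    ⟨⟨I, hI⟩, ⟨J, hJ⟩, fun h => hIJ (congrArg Subtype.val h)⟩
  obtain ⟨u, v, p, hp⟩ := h_path
  obtain ⟨a, c, hc⟩ := exists_isHamiltonianCycle_comap_prodVertex (F := F) hp
  exact ⟨_, c.map (SimpleGraph.Embedding.comap ⟨_, prodVertex_bijective.injective⟩ _).toHom,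
    hc.map prodVertex_bijective⟩
end

section
/- Let R₁ and R₂ be commutative rings with identity 1 ≠ 0 such that R₁ has only finitely many ideals and at least 3 ideals (counting the zero ideal and the whole ring), and R₂ has exactly 3 ideals. Then the intersection graph Γ(R₁ × R₂) of the product ring R₁ × R₂ is Hamiltonian. -/
open scoped Classical

/-!
The ideals of `R₁ × R₂` are the products `I × J`, and two of them meet nontrivially iff they do
so in one coordinate. Write `0 < M < R₂` for the ideals of `R₂` and `I₁, …, Iₙ` (`n ≥ 1`) for the
nontrivial ideals of `R₁`. Then
`(R₁,0), (R₁,M), (0,M), (0,R₂), (I₁,M), (I₁,0), (I₁,R₂), …, (Iₙ,M), (Iₙ,0), (Iₙ,R₂)`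
lists every nontrivial ideal of `R₁ × R₂` once, and consecutive terms meet in `R₁`, in `M` or in
some `Iₖ`; the last term meets the first in `Iₙ`, which is where `n ≥ 1` is needed. Only the
lattice structure of the ideals matters, so the cycle is built in the product lattice
`Ideal R₁ × Ideal R₂` and transported along `Ideal.idealProdEquiv`.
-/

theorem SimpleGraph.exists_isHamiltonianCycle_of_isChain {V : Type*} [DecidableEq V]
    {G : SimpleGraph V} {a : V} {t : List V} (hlen : 2 ≤ t.length) (hnodup : (a :: t).Nodup)
    (hmem : ∀ v, v ∈ a :: t) (hchain : (a :: t ++ [a]).IsChain G.Adj) :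
    ∃ p : G.Walk a a, p.IsHamiltonianCycle := by
  have hne : a :: t ++ [a] ≠ [] := by simp
  obtain ⟨p, hp⟩ : ∃ p : G.Walk a a, p.support = a :: t ++ [a] :=
    ⟨(Walk.ofSupport _ hne hchain).copy (by simp) (by simp),
      (Walk.support_copy _ _ _).trans (Walk.support_ofSupport _ _)⟩
  have hlength : p.length = t.length + 1 := by
    simpa [hp] using p.length_support.symm
  have htail : p.support.tail.Nodup := by
    simpa [hp] using List.nodup_append_comm.mp hnodup
  refine ⟨p, Walk.isHamiltonianCycle_iff_isCycle_and_support_count_tail_eq_one.mpr ⟨?_, fun v => ?_⟩⟩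
  · have hnil : ¬ p.Nil := by simp [← Walk.length_eq_zero_iff, hlength]
    rw [Walk.isCycle_iff_isPath_tail_and_le_length, Walk.isPath_def,
      Walk.support_tail_of_not_nil _ hnil]
    exact ⟨htail, by omega⟩
  · exact List.count_eq_one_of_mem htail (by simpa [hp, or_comm] using hmem v)

section Lattice

variable {α β : Type*}

theorem exists_eq_bot_or_eq_or_eq_top_of_card_eq_three [PartialOrder α] [BoundedOrder α]
    (h : Nat.card α = 3) : ∃ m : α, m ≠ ⊥ ∧ m ≠ ⊤ ∧ ∀ y, y = ⊥ ∨ y = m ∨ y = ⊤ := by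
  have : Finite α := Nat.finite_of_card_ne_zero (by omega)
  obtain ⟨m, hm_bot, hm_top⟩ :=
    ENat.exists_ne_ne_of_three_le (by simp [ENat.card_eq_coe_natCard, h]) (⊥ : α) ⊤
  have hbot_top : (⊥ : α) ≠ ⊤ := hm_bot.bot_lt.ne_top
  have huniv : ({⊥, m, ⊤} : Set α) = Set.univ :=
    Set.eq_of_subset_of_ncard_le (Set.subset_univ _)
      (by rw [Set.ncard_univ, h, Set.ncard_eq_three.2 ⟨⊥, m, ⊤, hm_bot.symm, hbot_top, hm_top, rfl⟩])
  refine ⟨m, hm_bot, hm_top, fun y => ?_⟩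
  have hy : y ∈ ({⊥, m, ⊤} : Set α) := huniv ▸ Set.mem_univ y
  simpa using hy

@[simp]
theorem Prod.mk_eq_bot_iff [Bot α] [Bot β] {x : α} {y : β} : (x, y) = ⊥ ↔ x = ⊥ ∧ y = ⊥ :=
  Prod.mk_inj

@[simp]
theorem Prod.mk_eq_top_iff [Top α] [Top β] {x : α} {y : β} : (x, y) = ⊤ ↔ x = ⊤ ∧ y = ⊤ :=
  Prod.mk_inj

variable [Lattice α] [BoundedOrder α] [Lattice β] [BoundedOrder β]

/-- A Hamiltonian cycle of the intersection graph, read in an arbitrary bounded lattice in place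
of the lattice of ideals. Two-element lists are excluded because `a, b, a` is not a cycle. -/
structure IsMeetCycle (a : α) (t : List α) : Prop where
  two_le_length : 2 ≤ t.length
  nodup : (a :: t).Nodup
  mem_iff : ∀ x, x ∈ a :: t ↔ x ≠ ⊥ ∧ x ≠ ⊤
  isChain : (a :: t ++ [a]).IsChain (fun x y => x ⊓ y ≠ ⊥)

theorem IsMeetCycle.map {a : α} {t : List α} (h : IsMeetCycle a t) (e : α ≃o β) :
    IsMeetCycle (e a) (t.map e) where
  two_le_length := by simpa using h.two_le_length
  nodup := by simpa using h.nodup.map e.injective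
  mem_iff x := by
    obtain ⟨x, rfl⟩ := e.surjective x
    simpa [e.injective.eq_iff] using h.mem_iff x
  isChain := by
    have hmap : e a :: t.map e ++ [e a] = (a :: t ++ [a]).map e := by simp
    rw [hmap, List.isChain_map]
    exact h.isChain.imp fun x y hxy => by rwa [← map_inf, Ne, map_eq_bot_iff]

theorem isChain_inf_ne_bot_product {m : β} (hm : m ≠ ⊥) {y : α} (hy : y ≠ ⊥) {l : List α}
    (hl : ∀ x ∈ l, x ≠ ⊥) :
    ((y, ⊤) :: l ×ˢ [m, ⊥, ⊤] ++ [(⊤, ⊥)]).IsChain (fun p q : α × β => p ⊓ q ≠ ⊥) := by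
  induction l generalizing y with
  | nil => simpa using hy
  | cons x l ih =>
    have hx := hl x List.mem_cons_self
    have := ih hx (fun z hz => hl z (List.mem_cons_of_mem _ hz))
    simp_all [List.isChain_cons_cons]

theorem exists_isMeetCycle_prod [Finite α] (hα : ∃ x : α, x ≠ ⊥ ∧ x ≠ ⊤) {m : β} (hm_bot : m ≠ ⊥)
    (hm_top : m ≠ ⊤) (hm : ∀ y, y = ⊥ ∨ y = m ∨ y = ⊤) :
    ∃ (a : α × β) (t : List (α × β)), IsMeetCycle a t := by
  obtain ⟨u, hu, huniv⟩ := Finite.exists_univ_list α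
  set l := u.filter (fun x => x ≠ ⊥ ∧ x ≠ ⊤)
  have hl : ∀ x, x ∈ l ↔ x ≠ ⊥ ∧ x ≠ ⊤ := by simp [l, huniv]
  obtain ⟨x₀, hx₀⟩ := hα
  have : Nontrivial α := ⟨x₀, ⊥, hx₀.1⟩
  have : Nontrivial β := ⟨m, ⊥, hm_bot⟩
  refine ⟨(⊤, ⊥), (⊤, m) :: (⊥, m) :: (⊥, ⊤) :: l ×ˢ [m, ⊥, ⊤], ⟨by simp, ?_, ?_, ?_⟩⟩
  · have : (l ×ˢ [m, ⊥, ⊤]).Nodup := (hu.filter _).product (by simp [hm_bot, hm_top])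
    simp [hl, hm_bot, hm_top, hm_bot.symm, this]
  · rintro ⟨x, y⟩
    rcases hm y with rfl | rfl | rfl <;> by_cases hx : x = ⊥ <;> by_cases hx' : x = ⊤ <;>
      simp_all [hm_bot.symm, hm_top.symm]
  · obtain ⟨x₁, l', hl'⟩ := List.exists_cons_of_ne_nil (List.ne_nil_of_mem ((hl x₀).2 hx₀))
    have hx₁ := (hl x₁).1 (hl' ▸ List.mem_cons_self)
    have := isChain_inf_ne_bot_product hm_bot hx₁.1 (l := l')
      fun x hx => ((hl x).1 (hl' ▸ List.mem_cons_of_mem _ hx)).1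
    rw [hl']
    simp_all [List.isChain_cons_cons]

end Lattice

theorem IsMeetCycle.exists_isHamiltonianCycle_intersectionGraph {R : Type*} [CommRing R]
    {A : Ideal R} {T : List (Ideal R)} (h : IsMeetCycle A T) :
    ∃ (v : {I : Ideal R // I ≠ ⊥ ∧ I ≠ ⊤}) (p : (intersectionGraph R).Walk v v),
      p.IsHamiltonianCycle := by
  lift A to {I : Ideal R // I ≠ ⊥ ∧ I ≠ ⊤} using (h.mem_iff A).1 List.mem_cons_self
  lift T to List {I : Ideal R // I ≠ ⊥ ∧ I ≠ ⊤} using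
    fun I hI => (h.mem_iff I).1 (List.mem_cons_of_mem _ hI)
  have hnodup : (A :: T).Nodup := .of_map Subtype.val h.nodup
  have hne : (A :: T ++ [A]).IsChain (· ≠ ·) := by
    have hT : T ≠ [] := by rintro rfl; simpa using h.two_le_length
    refine hnodup.isChain.append (.singleton A) ?_
    grind
  have hinf : (A :: T ++ [A]).IsChain (fun I J => I.1 ⊓ J.1 ≠ ⊥) :=
    (List.isChain_map Subtype.val (l := A :: T ++ [A])).1
      (by simpa only [List.map_cons, List.map_append, List.map_nil] using h.isChain)
  have hmem (I : {I : Ideal R // I ≠ ⊥ ∧ I ≠ ⊤}) : I ∈ A :: T := by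
    have := (h.mem_iff I.1).2 I.2
    rwa [← List.map_cons, List.mem_map_of_injective Subtype.val_injective] at this
  refine ⟨A, SimpleGraph.exists_isHamiltonianCycle_of_isChain
    (by simpa using h.two_le_length) hnodup hmem ?_⟩
  rw [List.isChain_iff_getElem] at hne hinf ⊢
  exact fun i hi => ⟨hne i hi, hinf i hi⟩

theorem intersectionGraph_prod_hamiltonian_of_three_ideals_general
    (R₁ R₂ : Type*) [CommRing R₁] [CommRing R₂]
    [Finite (Ideal R₁)]
    (h₁ : 3 ≤ Nat.card (Ideal R₁)) (h₂ : Nat.card (Ideal R₂) = 3) :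
    ∃ (a : {I : Ideal (R₁ × R₂) // I ≠ ⊥ ∧ I ≠ ⊤})
      (p : (intersectionGraph (R₁ × R₂)).Walk a a), p.IsHamiltonianCycle := by
  obtain ⟨M, hM_bot, hM_top, hM⟩ := exists_eq_bot_or_eq_or_eq_top_of_card_eq_three h₂
  obtain ⟨a, t, hcycle⟩ :=
    exists_isMeetCycle_prod (ENat.exists_ne_ne_of_three_le
      (by simpa [ENat.card_eq_coe_natCard] using h₁) (⊥ : Ideal R₁) ⊤) hM_bot hM_top hM
  exact (hcycle.map Ideal.idealProdEquiv.symm).exists_isHamiltonianCycle_intersectionGraph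

/-- If `R₁` is a commutative ring with `1 ≠ 0` having finitely many
ideals and at least 3 ideals, and `R₂` is a commutative ring with `1 ≠ 0` having exactly
3 ideals, then the intersection graph `Γ(R₁ × R₂)` is Hamiltonian. -/
theorem intersectionGraph_prod_hamiltonian_of_three_ideals
    (R₁ R₂ : Type*) [CommRing R₁] [CommRing R₂] [Nontrivial R₁] [Nontrivial R₂]
    [Finite (Ideal R₁)]
    (h₁ : 3 ≤ Nat.card (Ideal R₁)) (h₂ : Nat.card (Ideal R₂) = 3) :
    ∃ (a : {I : Ideal (R₁ × R₂) // I ≠ ⊥ ∧ I ≠ ⊤})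
      (p : (intersectionGraph (R₁ × R₂)).Walk a a), p.IsHamiltonianCycle :=
  intersectionGraph_prod_hamiltonian_of_three_ideals_general R₁ R₂ h₁ h₂
end
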